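/- Let D₁ be the submonoid of functions ℤ → ℤ generated by the elementary delays δ_i (i ∈ ℤ). Then D₁ is cofiltered: for any two d₁, d₂ ∈ D₁ there exist e₁, e₂ ∈ D₁ with d₁ ∘ e₁ = d₂ ∘ e₂. -/

import Mathlib

/-- Elementary delay δ_i as an endomorphism of ℤ. -/
def delta (i : ℤ) : Function.End ℤ := fun t => if t ≤ i then t else t - 1

/-- The monoid of delays, generated under composition by the elementary delays. -/
def D₁ : Submonoid (Function.End ℤ) := Submonoid.closure (Set.range delta)

lemma delta_mem (i : ℤ) : delta i ∈ D₁ :=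
  Submonoid.subset_closure ⟨i, rfl⟩

lemma delta_comm (a b : ℤ) (h : b ≤ a) :
    delta a ∘ delta b = delta b ∘ delta (a + 1) := by
  funext t
  show delta a (delta b t) = delta b (delta (a + 1) t)
  unfold delta
  split_ifs <;> omega

lemma lemA (d : Function.End ℤ) (hd : d ∈ D₁) :
    ∀ i : ℤ, ∃ j : ℤ, ∃ d' : Function.End ℤ, d' ∈ D₁ ∧ d ∘ delta j = delta i ∘ d' := by
  induction hd using Submonoid.closure_induction with
  | mem x hx =>
    obtain ⟨k, rfl⟩ := hx
    intro i
    rcases le_or_gt i k with h | h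
    · exact ⟨i, delta (k + 1), delta_mem _, delta_comm k i h⟩
    · exact ⟨i + 1, delta k, delta_mem _, (delta_comm i k h.le).symm⟩
  | one =>
    intro i
    exact ⟨i, 1, D₁.one_mem, rfl⟩
  | mul x y hx hy ihx ihy =>
    intro i
    obtain ⟨j₁, x', hx', hxeq⟩ := ihx i
    obtain ⟨j₂, y', hy', hyeq⟩ := ihy j₁
    refine ⟨j₂, x' ∘ y', D₁.mul_mem hx' hy', ?_⟩
    show x ∘ y ∘ delta j₂ = delta i ∘ x' ∘ y'
    rw [hyeq]
    exact congrArg (fun g : ℤ → ℤ => g ∘ y') hxeq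

theorem delays_cofiltered (d₁ d₂ : Function.End ℤ) (h₁ : d₁ ∈ D₁) (h₂ : d₂ ∈ D₁) :
    ∃ e₁ e₂ : Function.End ℤ, e₁ ∈ D₁ ∧ e₂ ∈ D₁ ∧ d₁ ∘ e₁ = d₂ ∘ e₂ := by
  induction h₂ using Submonoid.closure_induction generalizing d₁ with
  | mem x hx =>
    obtain ⟨i, rfl⟩ := hx
    obtain ⟨j, d', hd', heq⟩ := lemA d₁ h₁ i
    exact ⟨delta j, d', delta_mem j, hd', heq⟩
  | one =>
    exact ⟨1, d₁, D₁.one_mem, h₁, rfl⟩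
  | mul x y hx hy ihx ihy =>
    obtain ⟨a, b, ha, hb, hab⟩ := ihx d₁ h₁
    obtain ⟨c, f, hc, hf, hcf⟩ := ihy b hb
    refine ⟨a ∘ c, f, D₁.mul_mem ha hc, hf, ?_⟩
    show d₁ ∘ a ∘ c = (x ∘ y) ∘ f
    exact (congrArg (fun g : ℤ → ℤ => g ∘ c) hab).trans (congrArg (fun g : ℤ → ℤ => x ∘ g) hcf)
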